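/- arXiv:math/0010091 — 2 statements merged into one kernel-verified Lean document; each statement's English description precedes it below -/
import Mathlib

section
/- Set 𝒢^i(t,x,y) = Σ_{α,β} h^{αβ}(t) G^{(i)}_{(α)β}(t,x,y), where G^{(i)}_{(α)β} are the spatial components of the canonical spray. Then for all α ∈ Fin p, i, j ∈ Fin n and all (t,x,y), Σ_γ h_{αγ}(t)·(∂𝒢^i/∂y^j_γ)(t,x,y) = Σ_k γ^i_{jk}(x) y^k_α + (1/4)Σ_{γ,l} h_{αγ}(t) g^{il}(x) U^{(γ)}_{(l)j}(t,x); that is, the spatial components of the canonical nonlinear connection induced by the spray are N^{(i)}_{(α)j} = Σ_k γ^i_{jk} y^k_α + (1/4)Σ_{γ,l} h_{αγ} g^{il} U^{(γ)}_{(l)j}, while the temporal components are M^{(i)}_{(α)β} = 2H^{(i)}_{(α)β} = −Σ_γ H^γ_{αβ} y^i_γ. -/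
/- STATEMENT 2: The canonical nonlinear connection induced by the canonical spray of the
autonomous multi-time Lagrange space of electrodynamics has spatial components
`N^{(i)}_{(α)j} = Σ_γ h_{αγ} ∂𝒢^i/∂y^j_γ = Σ_k γ^i_{jk} y^k_α + (1/4)Σ_{γ,l} h_{αγ} g^{il} U^{(γ)}_{(l)j}`
and temporal components `M^{(i)}_{(α)β} = 2H^{(i)}_{(α)β} = −Σ_γ H^γ_{αβ} y^i_γ`. -/

open scoped BigOperators

noncomputable section

def pd {m : ℕ} (f : (Fin m → ℝ) → ℝ) (a : Fin m) (t : Fin m → ℝ) : ℝ :=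
  fderiv ℝ f t (Pi.single a 1)

def pdY {n p : ℕ} (f : (Fin n → Fin p → ℝ) → ℝ) (i : Fin n) (a : Fin p)
    (y : Fin n → Fin p → ℝ) : ℝ :=
  fderiv ℝ f y (Pi.single i (Pi.single a 1))

/-- Christoffel symbols `H^c_{ab}` of the temporal metric `h`. -/
def chT {p : ℕ} (h : (Fin p → ℝ) → Matrix (Fin p) (Fin p) ℝ)
    (c a b : Fin p) (t : Fin p → ℝ) : ℝ :=
  (1/2) * ∑ e, (h t)⁻¹ c e *
    (pd (fun s => h s e a) b t + pd (fun s => h s e b) a t - pd (fun s => h s a b) e t)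

/-- Christoffel symbols `γ^i_{jk}` of the spatial metric `g`. -/
def chS {n : ℕ} (g : (Fin n → ℝ) → Matrix (Fin n) (Fin n) ℝ)
    (i j k : Fin n) (x : Fin n → ℝ) : ℝ :=
  (1/2) * ∑ m, (g x)⁻¹ i m *
    (pd (fun z => g z m j) k x + pd (fun z => g z m k) j x - pd (fun z => g z j k) m x)

/-- `U^{(a)}_{(i)j} = ∂U^{(a)}_{(i)}/∂x^j − ∂U^{(a)}_{(j)}/∂x^i`. -/
def Ucurl {p n : ℕ} (U : Fin p → Fin n → (Fin p → ℝ) → (Fin n → ℝ) → ℝ)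
    (a : Fin p) (i j : Fin n) (t : Fin p → ℝ) (x : Fin n → ℝ) : ℝ :=
  pd (fun z => U a i t z) j x - pd (fun z => U a j t z) i x

/-- Temporal components of the canonical spray. -/
def sprayH {p n : ℕ} (h : (Fin p → ℝ) → Matrix (Fin p) (Fin p) ℝ)
    (i : Fin n) (a b : Fin p) (t : Fin p → ℝ) (y : Fin n → Fin p → ℝ) : ℝ :=
  -(1/2) * ∑ c, chT h c a b t * y i c

/-- Spatial components of the canonical spray. -/
def sprayG {p n : ℕ} (h : (Fin p → ℝ) → Matrix (Fin p) (Fin p) ℝ)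
    (g : (Fin n → ℝ) → Matrix (Fin n) (Fin n) ℝ)
    (U : Fin p → Fin n → (Fin p → ℝ) → (Fin n → ℝ) → ℝ)
    (F : (Fin p → ℝ) → (Fin n → ℝ) → ℝ)
    (i : Fin n) (a b : Fin p) (t : Fin p → ℝ) (x : Fin n → ℝ)
    (y : Fin n → Fin p → ℝ) : ℝ :=
  (1/2) * (∑ j, ∑ k, chS g i j k x * y j a * y k b) +
    (h t a b / (4 * (p : ℝ))) * ∑ l, (g x)⁻¹ i l *
      ((∑ m', ∑ m, Ucurl U m' l m t x * y m m')
        + (∑ m', pd (fun s => U m' l s x) m' t)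
        + (∑ m', ∑ c, U m' l t x * chT h c m' c t)
        - pd (fun z => F t z) l x)

/-- `𝒢^i = Σ_{α,β} h^{αβ} G^{(i)}_{(α)β}`. -/
def calG {p n : ℕ} (h : (Fin p → ℝ) → Matrix (Fin p) (Fin p) ℝ)
    (g : (Fin n → ℝ) → Matrix (Fin n) (Fin n) ℝ)
    (U : Fin p → Fin n → (Fin p → ℝ) → (Fin n → ℝ) → ℝ)
    (F : (Fin p → ℝ) → (Fin n → ℝ) → ℝ)
    (i : Fin n) (t : Fin p → ℝ) (x : Fin n → ℝ) (y : Fin n → Fin p → ℝ) : ℝ :=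
  ∑ a, ∑ b, (h t)⁻¹ a b * sprayG h g U F i a b t x y


/-- Evaluation functional `y ↦ y k b` as a continuous linear map. -/
def Eval (n p : ℕ) (k : Fin n) (b : Fin p) : (Fin n → Fin p → ℝ) →L[ℝ] ℝ :=
  (ContinuousLinearMap.proj b).comp
    (ContinuousLinearMap.proj (R := ℝ) (φ := fun _ : Fin n => Fin p → ℝ) k)

theorem canonical_nonlinear_connection {p n : ℕ} (hp : 0 < p)
    (h : (Fin p → ℝ) → Matrix (Fin p) (Fin p) ℝ)
    (g : (Fin n → ℝ) → Matrix (Fin n) (Fin n) ℝ)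
    (U : Fin p → Fin n → (Fin p → ℝ) → (Fin n → ℝ) → ℝ)
    (F : (Fin p → ℝ) → (Fin n → ℝ) → ℝ)
    (hsmooth : ∀ a b, ContDiff ℝ (⊤ : ℕ∞) (fun t => h t a b))
    (hsymm : ∀ t, (h t).IsSymm)
    (hinv : ∀ t, IsUnit (h t).det)
    (gsmooth : ∀ i j, ContDiff ℝ (⊤ : ℕ∞) (fun x => g x i j))
    (gsymm : ∀ x, (g x).IsSymm)
    (ginv : ∀ x, IsUnit (g x).det)
    (Usmooth : ∀ a i, ContDiff ℝ (⊤ : ℕ∞) (fun q : (Fin p → ℝ) × (Fin n → ℝ) => U a i q.1 q.2))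
    (Fsmooth : ContDiff ℝ (⊤ : ℕ∞) (fun q : (Fin p → ℝ) × (Fin n → ℝ) => F q.1 q.2)) :
    (∀ (a : Fin p) (i j : Fin n) (t : Fin p → ℝ) (x : Fin n → ℝ) (y : Fin n → Fin p → ℝ),
      ∑ c, h t a c * pdY (calG h g U F i t x) j c y =
        (∑ k, chS g i j k x * y k a)
          + (1/4) * ∑ c, ∑ l, h t a c * (g x)⁻¹ i l * Ucurl U c l j t x) ∧
    (∀ (i : Fin n) (a b : Fin p) (t : Fin p → ℝ) (y : Fin n → Fin p → ℝ),
      2 * sprayH h i a b t y = -∑ c, chT h c a b t * y i c) := by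
  constructor
  · intro a i j t x y
    have hE : ∀ (k : Fin n) (b : Fin p),
        HasFDerivAt (fun y : Fin n → Fin p → ℝ => y k b) (Eval n p k b) y :=
      fun k b => (Eval n p k b).hasFDerivAt
    -- symmetry facts
    have hisymm : ∀ (b c : Fin p), (h t)⁻¹ b c = (h t)⁻¹ c b := by
      intro b c
      have hs : ((h t)⁻¹).IsSymm := by
        rw [Matrix.IsSymm, Matrix.transpose_nonsing_inv, (hsymm t).eq]
      exact hs.apply c b
    have chSsymm : ∀ (j k : Fin n), chS g i j k x = chS g i k j x := by
      intro j k
      unfold chS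
      congr 1
      refine Finset.sum_congr rfl fun m _ => ?_
      have e1 : (fun z => g z j k) = (fun z => g z k j) :=
        funext fun z => (gsymm z).apply k j
      rw [e1]; ring
    have htrace : ∑ a', ∑ b, (h t)⁻¹ a' b * h t a' b = (p : ℝ) := by
      have h1 : (h t)⁻¹ * h t = 1 := Matrix.nonsing_inv_mul _ (hinv t)
      have h2 : ∀ a', ∑ b, (h t)⁻¹ a' b * h t a' b = ((h t)⁻¹ * h t) a' a' := by
        intro a'
        rw [Matrix.mul_apply]
        exact Finset.sum_congr rfl fun b _ => by rw [← (hsymm t).apply b a']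
      simp [h2, h1, Matrix.one_apply]
    have contract : ∀ (S : Fin p → ℝ),
        (∑ c, h t a c * ∑ b, (h t)⁻¹ c b * S b) = S a := by
      intro S
      have h1 : h t * (h t)⁻¹ = 1 := Matrix.mul_nonsing_inv _ (hinv t)
      calc ∑ c, h t a c * ∑ b, (h t)⁻¹ c b * S b
          = ∑ b, (∑ c, h t a c * (h t)⁻¹ c b) * S b := by
            simp only [Finset.mul_sum]
            rw [Finset.sum_comm]
            exact Finset.sum_congr rfl fun b _ => by
              rw [Finset.sum_mul]
              exact Finset.sum_congr rfl fun c _ => by ring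
        _ = ∑ b, (1 : Matrix (Fin p) (Fin p) ℝ) a b * S b := by
            refine Finset.sum_congr rfl fun b _ => ?_
            rw [← Matrix.mul_apply, h1]
        _ = S a := by simp [Matrix.one_apply]
    -- derivative of calG
    have hfun : calG h g U F i t x = fun y : Fin n → Fin p → ℝ =>
        ∑ a', ∑ b, (h t)⁻¹ a' b *
          ((1/2) * (∑ j', ∑ k, chS g i j' k x * y j' a' * y k b) +
            (h t a' b / (4 * (p : ℝ))) * ∑ l, (g x)⁻¹ i l *
              ((∑ m', ∑ m, Ucurl U m' l m t x * y m m')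
                + (∑ m', pd (fun s => U m' l s x) m' t)
                + (∑ m', ∑ c, U m' l t x * chT h c m' c t)
                - pd (fun z => F t z) l x)) := rfl
    have hD : HasFDerivAt (calG h g U F i t x)
        (∑ a', ∑ b, (h t)⁻¹ a' b •
          ((1/2 : ℝ) • (∑ j', ∑ k, ((chS g i j' k x * y j' a') • Eval n p k b
              + y k b • chS g i j' k x • Eval n p j' a'))
            + (h t a' b / (4 * (p : ℝ))) • (∑ l, (g x)⁻¹ i l •
                (∑ m' : Fin p, ∑ m : Fin n, Ucurl U m' l m t x • Eval n p m m')))) y := by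
      rw [hfun]
      apply HasFDerivAt.fun_sum; intro a' _
      apply HasFDerivAt.fun_sum; intro b _
      apply HasFDerivAt.const_mul
      exact ((HasFDerivAt.fun_sum (fun j' _ => HasFDerivAt.fun_sum (fun k _ =>
          ((hE j' a').const_mul _).mul (hE k b)))).const_mul _).add
        ((HasFDerivAt.fun_sum (fun l _ =>
          ((((HasFDerivAt.fun_sum (fun m' _ => HasFDerivAt.fun_sum (fun m _ =>
            (hE m m').const_mul _))).add_const _).add_const _).sub_const _).const_mul _)).const_mul _)
    -- value of the partial derivatives
    have hval : ∀ cc : Fin p, pdY (calG h g U F i t x) j cc y =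
        (∑ b, ∑ k, (h t)⁻¹ b cc * (1/2 * (chS g i k j x * y k b)))
          + (∑ b, ∑ k, (h t)⁻¹ cc b * (1/2 * (y k b * chS g i j k x)))
          + ∑ a', ∑ b, ∑ l, (h t)⁻¹ a' b *
              (h t a' b / (4 * (p : ℝ)) * ((g x)⁻¹ i l * Ucurl U cc l j t x)) := by
      intro cc
      rw [pdY, hD.fderiv]
      have hEs : ∀ (k : Fin n) (b : Fin p), Eval n p k b (Pi.single j (Pi.single cc 1)) =
          (if k = j then (if b = cc then (1:ℝ) else 0) else 0) := by
        intro k b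
        show (Pi.single j (Pi.single cc (1:ℝ) : Fin p → ℝ) : Fin n → Fin p → ℝ) k b = _
        simp [Pi.single_apply, ite_apply]
      simp only [ContinuousLinearMap.sum_apply, ContinuousLinearMap.add_apply,
        ContinuousLinearMap.smul_apply, hEs, smul_eq_mul]
      simp only [mul_ite, ite_mul, mul_zero, zero_mul, mul_one, Finset.sum_ite_eq',
        Finset.sum_ite_eq, Finset.mem_univ, if_true]
      simp only [Finset.sum_add_distrib, Finset.sum_ite_irrel, Finset.sum_const_zero,
        Finset.sum_ite_eq, Finset.sum_ite_eq', Finset.mem_univ, if_true, mul_ite, ite_mul,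
        mul_zero, zero_mul, mul_add, Finset.mul_sum]

    -- assemble
    have hsplit : ∑ c, h t a c * pdY (calG h g U F i t x) j c y =
        (∑ c, h t a c * ∑ b, (h t)⁻¹ c b * ((1/2) * ∑ k, chS g i j k x * y k b))
          + (∑ c, h t a c * ∑ b, (h t)⁻¹ c b * ((1/2) * ∑ k, chS g i j k x * y k b))
          + ∑ c, h t a c *
              ((∑ a', ∑ b, (h t)⁻¹ a' b * h t a' b)
                * ((1 / (4 * (p:ℝ))) * ∑ l, (g x)⁻¹ i l * Ucurl U c l j t x)) := by
      rw [← Finset.sum_add_distrib, ← Finset.sum_add_distrib]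
      refine Finset.sum_congr rfl fun c _ => ?_
      rw [hval c, mul_add, mul_add]
      congr 2
      · congr 1
        refine Finset.sum_congr rfl fun b _ => ?_
        simp only [Finset.mul_sum]
        refine Finset.sum_congr rfl fun k _ => ?_
        rw [hisymm b c, chSsymm j k]
      · congr 1
        refine Finset.sum_congr rfl fun b _ => ?_
        simp only [Finset.mul_sum]
        refine Finset.sum_congr rfl fun k _ => ?_
        ring
      · congr 1
        simp only [Finset.sum_mul, Finset.mul_sum]
        conv_rhs => rw [Finset.sum_comm]
        refine Finset.sum_congr rfl fun a' _ => ?_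
        rw [Finset.sum_comm]
        refine Finset.sum_congr rfl fun l _ => ?_
        refine Finset.sum_congr rfl fun b _ => ?_
        ring
    rw [hsplit, htrace, contract]
    have hpne : (p : ℝ) ≠ 0 := Nat.cast_ne_zero.mpr hp.ne'
    have hx : (1/2) * ∑ k, chS g i j k x * y k a + (1/2) * ∑ k, chS g i j k x * y k a
        = ∑ k, chS g i j k x * y k a := by ring
    rw [hx]
    congr 1
    simp only [Finset.mul_sum]
    refine Finset.sum_congr rfl fun c _ => Finset.sum_congr rfl fun l _ => ?_
    field_simp
  · intro i a b t y
    unfold sprayH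
    ring


end
end

section
/- The temporal–temporal torsion d-tensor of the Cartan canonical connection of the autonomous metrical multi-time Lagrange space of electrodynamics, defined as R^{(m)}_{(μ)αβ} = δM^{(m)}_{(μ)α}/δt^β − δM^{(m)}_{(μ)β}/δt^α, satisfies R^{(m)}_{(μ)αβ}(t,y) = −Σ_γ H^γ_{μαβ}(t) y^m_γ for all indices and all (t,y), where H^γ_{μαβ} = ∂H^γ_{μα}/∂t^β − ∂H^γ_{μβ}/∂t^α + Σ_η (H^η_{μα} H^γ_{ηβ} − H^η_{μβ} H^γ_{ηα}) is the curvature tensor of the semi-Riemannian metric h. -/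
/- STATEMENT 4: The temporal–temporal torsion d-tensor of the Cartan canonical
connection satisfies `R^{(m)}_{(μ)αβ}(t,y) = −Σ_γ H^γ_{μαβ}(t) y^m_γ`, where
`H^γ_{μαβ}` is the curvature tensor of the temporal metric `h`. -/

open scoped BigOperators

noncomputable section

/-- Temporal components `M^{(i)}_{(a)b} = −Σ_c H^c_{ab}(t) y^i_c` of the canonical
nonlinear connection. -/
def Mcon {p n : ℕ} (h : (Fin p → ℝ) → Matrix (Fin p) (Fin p) ℝ)
    (i : Fin n) (a b : Fin p) (t : Fin p → ℝ) (y : Fin n → Fin p → ℝ) : ℝ :=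
  -∑ c, chT h c a b t * y i c

/-- Spatial components
`N^{(i)}_{(a)j} = Σ_k γ^i_{jk}(x) y^k_a + (1/4)Σ_{c,l} h_{ac}(t) g^{il}(x) U^{(c)}_{(l)j}(t,x)`
of the canonical nonlinear connection. -/
def Ncon {p n : ℕ} (h : (Fin p → ℝ) → Matrix (Fin p) (Fin p) ℝ)
    (g : (Fin n → ℝ) → Matrix (Fin n) (Fin n) ℝ)
    (U : Fin p → Fin n → (Fin p → ℝ) → (Fin n → ℝ) → ℝ)
    (i : Fin n) (a : Fin p) (j : Fin n) (t : Fin p → ℝ) (x : Fin n → ℝ)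
    (y : Fin n → Fin p → ℝ) : ℝ :=
  (∑ k, chS g i j k x * y k a)
    + (1/4) * ∑ c, ∑ l, h t a c * (g x)⁻¹ i l * Ucurl U c l j t x

/-- Adapted temporal derivative `δ/δt^b = ∂/∂t^b − Σ_{k,c} M^{(k)}_{(c)b} ∂/∂y^k_c`
applied to a function on the 1-jet space. -/
def deltaT {p n : ℕ} (h : (Fin p → ℝ) → Matrix (Fin p) (Fin p) ℝ)
    (J : (Fin p → ℝ) → (Fin n → ℝ) → (Fin n → Fin p → ℝ) → ℝ) (b : Fin p)
    (t : Fin p → ℝ) (x : Fin n → ℝ) (y : Fin n → Fin p → ℝ) : ℝ :=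
  pd (fun s => J s x y) b t - ∑ k, ∑ c, Mcon h k c b t y * pdY (J t x) k c y

/-- Adapted spatial derivative `δ/δx^j = ∂/∂x^j − Σ_{k,c} N^{(k)}_{(c)j} ∂/∂y^k_c`
applied to a function on the 1-jet space. -/
def deltaX {p n : ℕ} (h : (Fin p → ℝ) → Matrix (Fin p) (Fin p) ℝ)
    (g : (Fin n → ℝ) → Matrix (Fin n) (Fin n) ℝ)
    (U : Fin p → Fin n → (Fin p → ℝ) → (Fin n → ℝ) → ℝ)
    (J : (Fin p → ℝ) → (Fin n → ℝ) → (Fin n → Fin p → ℝ) → ℝ) (j : Fin n)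
    (t : Fin p → ℝ) (x : Fin n → ℝ) (y : Fin n → Fin p → ℝ) : ℝ :=
  pd (fun z => J t z y) j x - ∑ k, ∑ c, Ncon h g U k c j t x y * pdY (J t x) k c y

/-- Curvature tensor
`H^c_{mab} = ∂H^c_{ma}/∂t^b − ∂H^c_{mb}/∂t^a + Σ_e (H^e_{ma}H^c_{eb} − H^e_{mb}H^c_{ea})`
of the temporal metric `h`. -/
def curvT {p : ℕ} (h : (Fin p → ℝ) → Matrix (Fin p) (Fin p) ℝ)
    (c m a b : Fin p) (t : Fin p → ℝ) : ℝ :=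
  pd (fun s => chT h c m a s) b t - pd (fun s => chT h c m b s) a t
    + ∑ e, (chT h e m a t * chT h c e b t - chT h e m b t * chT h c e a t)

/-- Temporal–temporal torsion
`R^{(m)}_{(μ)αβ} = δM^{(m)}_{(μ)α}/δt^β − δM^{(m)}_{(μ)β}/δt^α`. -/
def torsionTT {p n : ℕ} (h : (Fin p → ℝ) → Matrix (Fin p) (Fin p) ℝ)
    (m : Fin n) (mu a b : Fin p)
    (t : Fin p → ℝ) (x : Fin n → ℝ) (y : Fin n → Fin p → ℝ) : ℝ :=
  deltaT h (fun s _ w => Mcon h m mu a s w) b t x y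
    - deltaT h (fun s _ w => Mcon h m mu b s w) a t x y


section AuxLemmas

variable {p n : ℕ}

lemma diffAt_det {q : ℕ} (M : (Fin p → ℝ) → Matrix (Fin q) (Fin q) ℝ) (t : Fin p → ℝ)
    (hM : ∀ i j, DifferentiableAt ℝ (fun s => M s i j) t) :
    DifferentiableAt ℝ (fun s => (M s).det) t := by
  simp only [Matrix.det_apply']
  refine DifferentiableAt.fun_sum fun σ _ => DifferentiableAt.const_mul ?_ _
  exact (HasFDerivAt.finset_prod
    (fun i (_ : i ∈ Finset.univ) => (hM (σ i) i).hasFDerivAt)).differentiableAt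

lemma diffAt_inv_entry (h : (Fin p → ℝ) → Matrix (Fin p) (Fin p) ℝ)
    (hsmooth : ∀ a b, ContDiff ℝ (⊤ : ℕ∞) (fun t => h t a b))
    (hinv : ∀ t, IsUnit (h t).det) (c e : Fin p) (t : Fin p → ℝ) :
    DifferentiableAt ℝ (fun s => (h s)⁻¹ c e) t := by
  have hd : ∀ i j, DifferentiableAt ℝ (fun s => h s i j) t := fun i j =>
    ((hsmooth i j).differentiable (by simp)).differentiableAt
  have hdet : DifferentiableAt ℝ (fun s => (h s).det) t := diffAt_det h t hd
  have hadj : DifferentiableAt ℝ (fun s => (h s).adjugate c e) t := by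
    simp only [Matrix.adjugate_apply]
    refine diffAt_det _ t fun i j => ?_
    simp only [Matrix.updateRow_apply]
    by_cases hij : i = e
    · simp [hij]
    · simpa [hij] using hd i j
  have heq : (fun s => (h s)⁻¹ c e) = fun s => ((h s).det)⁻¹ * (h s).adjugate c e := by
    funext s
    rw [Matrix.inv_def, Matrix.smul_apply, Ring.inverse_eq_inv, smul_eq_mul]
  rw [heq]
  exact (hdet.inv (IsUnit.ne_zero (hinv t))).mul hadj

lemma diffAt_pd_entry (f : (Fin p → ℝ) → ℝ) (hf : ContDiff ℝ (⊤ : ℕ∞) f) (b : Fin p)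
    (t : Fin p → ℝ) : DifferentiableAt ℝ (fun s => pd f b s) t := by
  have : ContDiff ℝ (⊤ : ℕ∞) (fun s => fderiv ℝ f s (Pi.single b 1)) :=
    (hf.fderiv_right (by simp)).clm_apply contDiff_const
  exact (this.differentiable (by simp)).differentiableAt

lemma diffAt_chT (h : (Fin p → ℝ) → Matrix (Fin p) (Fin p) ℝ)
    (hsmooth : ∀ a b, ContDiff ℝ (⊤ : ℕ∞) (fun t => h t a b))
    (hinv : ∀ t, IsUnit (h t).det) (c a b : Fin p) (t : Fin p → ℝ) :
    DifferentiableAt ℝ (fun s => chT h c a b s) t := by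
  unfold chT
  refine DifferentiableAt.const_mul ?_ _
  refine DifferentiableAt.fun_sum fun e _ => ?_
  exact (diffAt_inv_entry h hsmooth hinv c e t).mul
    (((diffAt_pd_entry _ (hsmooth e a) b t).add (diffAt_pd_entry _ (hsmooth e b) a t)).sub
      (diffAt_pd_entry _ (hsmooth a b) e t))

lemma pd_neg (f : (Fin p → ℝ) → ℝ) (b : Fin p) (t : Fin p → ℝ) :
    pd (fun s => -f s) b t = -pd f b t := by
  unfold pd
  rw [fderiv_fun_neg, ContinuousLinearMap.neg_apply]

lemma pd_sum_mul {ι : Type*} (S : Finset ι) (f : ι → (Fin p → ℝ) → ℝ) (k : ι → ℝ)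
    (b : Fin p) (t : Fin p → ℝ) (hf : ∀ c ∈ S, DifferentiableAt ℝ (f c) t) :
    pd (fun s => ∑ c ∈ S, f c s * k c) b t = ∑ c ∈ S, pd (f c) b t * k c := by
  unfold pd
  rw [fderiv_fun_sum (fun c hc => (hf c hc).mul_const _)]
  rw [ContinuousLinearMap.sum_apply]
  refine Finset.sum_congr rfl fun c hc => ?_
  rw [fderiv_mul_const (hf c hc), ContinuousLinearMap.smul_apply, smul_eq_mul, mul_comm]

lemma pdY_linear (A : Fin p → ℝ) (m k : Fin n) (c : Fin p) (y : Fin n → Fin p → ℝ) :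
    pdY (fun w : Fin n → Fin p → ℝ => -∑ e, A e * w m e) k c y
      = -(if m = k then A c else 0) := by
  classical
  have hL : ∀ e : Fin p, DifferentiableAt ℝ (fun w : Fin n → Fin p → ℝ => w m e) y :=
    fun e => ((ContinuousLinearMap.proj (R := ℝ) (φ := fun _ : Fin p => ℝ) e).comp
      (ContinuousLinearMap.proj (R := ℝ) (φ := fun _ : Fin n => (Fin p → ℝ)) m)).differentiableAt
  have hfd : ∀ e : Fin p, fderiv ℝ (fun w : Fin n → Fin p → ℝ => w m e) y
      = (ContinuousLinearMap.proj (R := ℝ) (φ := fun _ : Fin p => ℝ) e).comp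
        (ContinuousLinearMap.proj (R := ℝ) (φ := fun _ : Fin n => (Fin p → ℝ)) m) := by
    intro e
    have heq : (fun w : Fin n → Fin p → ℝ => w m e)
        = ⇑((ContinuousLinearMap.proj (R := ℝ) (φ := fun _ : Fin p => ℝ) e).comp
          (ContinuousLinearMap.proj (R := ℝ) (φ := fun _ : Fin n => (Fin p → ℝ)) m)) := rfl
    rw [heq]
    exact ContinuousLinearMap.fderiv _
  have key : fderiv ℝ (fun w : Fin n → Fin p → ℝ => ∑ e, A e * w m e) y
      (Pi.single k (Pi.single c 1))
      = ∑ e, A e * ((Pi.single k (Pi.single c 1) : Fin n → Fin p → ℝ) m e) := by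
    rw [fderiv_fun_sum (fun e _ => (hL e).const_mul _), ContinuousLinearMap.sum_apply]
    refine Finset.sum_congr rfl fun e _ => ?_
    rw [fderiv_const_mul (hL e), ContinuousLinearMap.smul_apply, hfd e, smul_eq_mul]
    rfl
  unfold pdY
  rw [fderiv_fun_neg, ContinuousLinearMap.neg_apply, key]
  by_cases hmk : m = k <;> simp [Pi.single_apply, hmk]

lemma deltaT_Mcon (h : (Fin p → ℝ) → Matrix (Fin p) (Fin p) ℝ)
    (hsmooth : ∀ a b, ContDiff ℝ (⊤ : ℕ∞) (fun t => h t a b))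
    (hinv : ∀ t, IsUnit (h t).det)
    (m : Fin n) (mu a b : Fin p) (t : Fin p → ℝ) (x : Fin n → ℝ)
    (y : Fin n → Fin p → ℝ) :
    deltaT h (fun s _ w => Mcon h m mu a s w) b t x y
      = -(∑ c, pd (fun s => chT h c mu a s) b t * y m c)
        - ∑ c, ∑ e, chT h c mu a t * chT h e c b t * y m e := by
  unfold deltaT
  have h1 : pd (fun s => Mcon h m mu a s y) b t
      = -∑ c, pd (fun s => chT h c mu a s) b t * y m c := by
    have heq : (fun s => Mcon h m mu a s y)
        = fun s => -∑ c, chT h c mu a s * y m c := rfl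
    rw [heq, pd_neg, pd_sum_mul _ _ _ _ _ (fun c _ => diffAt_chT h hsmooth hinv c mu a t)]
  have h2 : ∀ (k : Fin n) (c : Fin p),
      pdY ((fun s (_ : Fin n → ℝ) w => Mcon h m mu a s w) t x) k c y
        = -(if m = k then chT h c mu a t else 0) :=
    fun k c => pdY_linear (fun e => chT h e mu a t) m k c y
  have h3 : (∑ k, ∑ c, Mcon h k c b t y *
        pdY ((fun s (_ : Fin n → ℝ) w => Mcon h m mu a s w) t x) k c y)
      = -∑ c, Mcon h m c b t y * chT h c mu a t := by
    calc (∑ k, ∑ c, Mcon h k c b t y *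
          pdY ((fun s (_ : Fin n → ℝ) w => Mcon h m mu a s w) t x) k c y)
        = ∑ k, ∑ c, -(if m = k then Mcon h k c b t y * chT h c mu a t else 0) := by
          simp only [h2, mul_neg, mul_ite, mul_zero]
      _ = ∑ c : Fin p, ∑ k : Fin n,
            -(if m = k then Mcon h k c b t y * chT h c mu a t else 0) := Finset.sum_comm
      _ = -∑ c, Mcon h m c b t y * chT h c mu a t := by
          rw [← Finset.sum_neg_distrib]
          refine Finset.sum_congr rfl fun c _ => ?_
          rw [Finset.sum_neg_distrib, neg_inj, Finset.sum_ite_eq]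
          simp
  have h4 : (∑ c, Mcon h m c b t y * chT h c mu a t)
      = -∑ c, ∑ e, chT h c mu a t * chT h e c b t * y m e := by
    unfold Mcon
    rw [← Finset.sum_neg_distrib]
    refine Finset.sum_congr rfl fun c _ => ?_
    rw [neg_mul, Finset.sum_mul, neg_inj]
    exact Finset.sum_congr rfl fun e _ => by ring
  rw [h1, h3, h4]
  ring

end AuxLemmas

theorem temporal_torsion_of_cartan_connection {p n : ℕ}
    (h : (Fin p → ℝ) → Matrix (Fin p) (Fin p) ℝ)
    (g : (Fin n → ℝ) → Matrix (Fin n) (Fin n) ℝ)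
    (U : Fin p → Fin n → (Fin p → ℝ) → (Fin n → ℝ) → ℝ)
    (hsmooth : ∀ a b, ContDiff ℝ (⊤ : ℕ∞) (fun t => h t a b))
    (hsymm : ∀ t, (h t).IsSymm)
    (hinv : ∀ t, IsUnit (h t).det)
    (gsmooth : ∀ i j, ContDiff ℝ (⊤ : ℕ∞) (fun x => g x i j))
    (gsymm : ∀ x, (g x).IsSymm)
    (ginv : ∀ x, IsUnit (g x).det)
    (Usmooth : ∀ a i, ContDiff ℝ (⊤ : ℕ∞) (fun q : (Fin p → ℝ) × (Fin n → ℝ) => U a i q.1 q.2))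
    (m : Fin n) (mu a b : Fin p)
    (t : Fin p → ℝ) (x : Fin n → ℝ) (y : Fin n → Fin p → ℝ) :
    torsionTT h m mu a b t x y = -∑ c, curvT h c mu a b t * y m c := by
  unfold torsionTT
  rw [deltaT_Mcon h hsmooth hinv m mu a b t x y, deltaT_Mcon h hsmooth hinv m mu b a t x y]
  have hR : ∑ c, curvT h c mu a b t * y m c
      = (∑ c, pd (fun s => chT h c mu a s) b t * y m c)
        - (∑ c, pd (fun s => chT h c mu b s) a t * y m c)
        + ((∑ c, ∑ e, chT h e mu a t * chT h c e b t * y m c)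
          - (∑ c, ∑ e, chT h e mu b t * chT h c e a t * y m c)) := by
    unfold curvT
    simp only [sub_mul, add_mul, Finset.sum_mul, Finset.sum_sub_distrib,
      Finset.sum_add_distrib]
  have hC1 : (∑ c, ∑ e, chT h c mu a t * chT h e c b t * y m e)
      = ∑ c, ∑ e, chT h e mu a t * chT h c e b t * y m c := Finset.sum_comm
  have hC2 : (∑ c, ∑ e, chT h c mu b t * chT h e c a t * y m e)
      = ∑ c, ∑ e, chT h e mu b t * chT h c e a t * y m c := Finset.sum_comm
  rw [hR, ← hC1, ← hC2]
  ring

end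
end
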